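/- arXiv:1103.0495 — 2 statements merged into one kernel-verified Lean document; each statement's English description precedes it below -/
import Mathlib

section
/- Let x > 0. Then: (i) the derivative of t ↦ g₁²(t)/G₁(t) at x is strictly positive; (ii) if the derivative of t ↦ G₁(t)/g₂²(t) at x is strictly positive, then the derivative of t ↦ g₁(t)/g₂(t) at x is strictly positive; (iii) if there exists d ∈ [0,1) such that d·g₁(x)/G₁(x) − 2g₂′(x)/g₂(x) ≥ 0 (i.e. the logarithmic derivative of G₁^d/g₂² at x is nonnegative), then the derivative of t ↦ G₁(t)/g₂²(t) at x is strictly positive. -/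
/-!
With `F := 2 g₁′ G₁ - g₁²` one has `F(0) = 0` and `F′ = 2 g₁″ G₁ > 0`, so `g₁² < 2 g₁′ G₁`
on `(0, ∞)`; this is exactly the positivity of `(g₁²/G₁)′`. The derivative of `G₁/g₂²` is
positive iff `2 g₂′ G₁ < g₁ g₂`. Combined with `g₁² < 2 g₁′ G₁` this gives `g₁ g₂′ < g₁′ g₂`,
i.e. `(g₁/g₂)′ > 0`; and `2 g₂′ G₁ ≤ d g₁ g₂ < g₁ g₂` when `d < 1`.
-/

noncomputable section

/-- `Useq g1 h k` is the function `U_{k+1}` (0-indexed version of the recursion). -/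
def Useq (g1 : ℝ → ℝ) (h : ℝ) : ℕ → ℝ → ℝ
  | 0 => fun x => x
  | 1 => fun x => x + h ^ 2 / 2 * g1 x
  | k + 2 => fun x =>
      2 * Useq g1 h (k + 1) x - Useq g1 h k x + h ^ 2 * g1 (Useq g1 h (k + 1) x)

/-- `discU g1 h k` is the function `U_k` from the paper, for `1 ≤ k`. -/
def discU (g1 : ℝ → ℝ) (h : ℝ) (k : ℕ) : ℝ → ℝ := Useq g1 h (k - 1)

/-- The function `A(u₁)` from the paper. -/
def discA (g1 g2 : ℝ → ℝ) (h : ℝ) (n : ℕ) (x : ℝ) : ℝ :=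
  ((discU g1 h n x - discU g1 h (n - 1) x) / h + h / 2 * g1 (discU g1 h n x)) /
    g2 (discU g1 h n x)

/-- `(u₁, …, u_n)` (encoded as `u : ℕ → ℝ` on indices `1,…,n`) is a positive solution of
the discrete system `(Sα)`. -/
def IsSolution (g1 g2 : ℝ → ℝ) (n : ℕ) (h α : ℝ) (u : ℕ → ℝ) : Prop :=
  (∀ k, 1 ≤ k → k ≤ n → 0 < u k) ∧
  u 2 - u 1 = h ^ 2 / 2 * g1 (u 1) ∧
  (∀ k, 2 ≤ k → k ≤ n - 1 → u (k + 1) - 2 * u k + u (k - 1) = h ^ 2 * g1 (u k)) ∧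
  u n - u (n - 1) = -(h ^ 2 / 2) * g1 (u n) + h * α * g2 (u n)

/-- `G₁`, the primitive of `g₁` vanishing at `0`. -/
def primG1 (g1 : ℝ → ℝ) (x : ℝ) : ℝ := ∫ t in (0:ℝ)..x, g1 t

/-- `g := g₁/g₂`. -/
def gg (g1 g2 : ℝ → ℝ) (x : ℝ) : ℝ := g1 x / g2 x

/-- `G := G₁/g₂²`. -/
def GG (g1 g2 : ℝ → ℝ) (x : ℝ) : ℝ := primG1 g1 x / (g2 x) ^ 2

/-- The trapezoidal-rule error `E` as a function of `u₁`. -/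
def trapError (g1 : ℝ → ℝ) (h : ℝ) (n : ℕ) (x : ℝ) : ℝ :=
  (∑ k ∈ Finset.Icc 1 (n - 1),
    (g1 (discU g1 h k x) + g1 (discU g1 h (k + 1) x)) / 2 *
      (discU g1 h (k + 1) x - discU g1 h k x)) -
  (primG1 g1 (discU g1 h n x) - primG1 g1 (discU g1 h 1 x))

/-- The Jacobian matrix `J(α,u)` of the system `(Sα)`. -/
def Jmat (g1 g2 : ℝ → ℝ) (n : ℕ) (h α : ℝ) (u : ℕ → ℝ) : Matrix (Fin n) (Fin n) ℝ :=
  Matrix.of fun i j =>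
    if i = j then
      (if (i : ℕ) = 0 then 1 + h ^ 2 / 2 * deriv g1 (u 1)
       else if (i : ℕ) = n - 1 then
         1 + h ^ 2 / 2 * deriv g1 (u n) - h * α * deriv g2 (u n)
       else 2 + h ^ 2 * deriv g1 (u ((i : ℕ) + 1)))
    else if (i : ℕ) + 1 = (j : ℕ) ∨ (j : ℕ) + 1 = (i : ℕ) then -1 else 0

open Set

lemma lt_of_deriv_pos_of_lt {f : ℝ → ℝ} {a x : ℝ} (hf : ContinuousOn f (Ici a))
    (hf' : ∀ t > a, 0 < deriv f t) (hx : a < x) : f a < f x :=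
  strictMonoOn_of_deriv_pos (convex_Ici a) hf (by rwa [interior_Ici])
    self_mem_Ici hx.le hx

lemma pos_of_deriv_pos {f : ℝ → ℝ} (hf : Continuous f) (h0 : f 0 = 0)
    (hf' : ∀ t > 0, 0 < deriv f t) {x : ℝ} (hx : 0 < x) : 0 < f x :=
  h0 ▸ lt_of_deriv_pos_of_lt hf.continuousOn hf' hx

section

variable {g1 g2 : ℝ → ℝ} {x : ℝ}

lemma hasDerivAt_primG1 (hg1 : Continuous g1) (x : ℝ) : HasDerivAt (primG1 g1) (g1 x) x :=
  (hg1.integral_hasStrictDerivAt 0 x).hasDerivAt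

lemma primG1_zero : primG1 g1 0 = 0 :=
  intervalIntegral.integral_same

lemma primG1_pos (hg1 : Continuous g1) (hg1pos : ∀ t > 0, 0 < g1 t) (hx : 0 < x) :
    0 < primG1 g1 x :=
  intervalIntegral.intervalIntegral_pos_of_pos_on (hg1.intervalIntegrable _ _)
    (fun t ht => hg1pos t ht.1) hx

lemma sq_lt_two_mul_deriv_mul_primG1 (hg1 : ContDiff ℝ 2 g1) (hg10 : g1 0 = 0)
    (hg1pos : ∀ t > 0, 0 < g1 t) (hg1dd : ∀ t > 0, 0 < deriv (deriv g1) t) (hx : 0 < x) :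
    g1 x ^ 2 < 2 * deriv g1 x * primG1 g1 x := by
  have hg1' : ContDiff ℝ 1 (deriv g1) := hg1.iterate_deriv' 1 1
  have hcont : Continuous g1 := hg1.continuous
  set F : ℝ → ℝ := fun t => 2 * deriv g1 t * primG1 g1 t - g1 t ^ 2
  have hF : ∀ t, HasDerivAt F (2 * deriv (deriv g1) t * primG1 g1 t) t := fun t =>
    (((hg1'.differentiable one_ne_zero t).hasDerivAt.const_mul 2).mul
      (hasDerivAt_primG1 hcont t)).sub ((hg1.differentiable two_ne_zero t).hasDerivAt.pow 2)
      |>.congr_deriv (by push_cast; ring)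
  have hFx : F 0 < F x := by
    refine lt_of_deriv_pos_of_lt (fun t _ => (hF t).continuousAt.continuousWithinAt)
      (fun t ht => ?_) hx
    rw [(hF t).deriv]
    have := primG1_pos hcont hg1pos ht
    have := hg1dd t ht
    positivity
  simpa [F, primG1_zero, hg10] using hFx

lemma deriv_sq_div_primG1_pos (hg1 : Continuous g1) (hg1x : DifferentiableAt ℝ g1 x)
    (hg1xpos : 0 < g1 x) (hG1x : 0 < primG1 g1 x)
    (hkey : g1 x ^ 2 < 2 * deriv g1 x * primG1 g1 x) :
    0 < deriv (fun t => g1 t ^ 2 / primG1 g1 t) x := by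
  have hD : HasDerivAt (fun t => g1 t ^ 2 / primG1 g1 t)
      ((2 * g1 x * deriv g1 x * primG1 g1 x - g1 x ^ 2 * g1 x) / primG1 g1 x ^ 2) x :=
    (hg1x.hasDerivAt.pow 2).div (hasDerivAt_primG1 hg1 x) hG1x.ne' |>.congr_deriv
      (by simp only [Pi.pow_apply]; push_cast; ring)
  rw [hD.deriv]
  exact div_pos (by nlinarith) (by positivity)

lemma deriv_primG1_div_sq_pos_iff (hg1 : Continuous g1) (hg2x : DifferentiableAt ℝ g2 x)
    (hg2xpos : 0 < g2 x) :
    0 < deriv (fun t => primG1 g1 t / g2 t ^ 2) x ↔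
      2 * deriv g2 x * primG1 g1 x < g1 x * g2 x := by
  have hD : HasDerivAt (fun t => primG1 g1 t / g2 t ^ 2)
      (g2 x * (g1 x * g2 x - 2 * deriv g2 x * primG1 g1 x) / (g2 x ^ 2) ^ 2) x :=
    (hasDerivAt_primG1 hg1 x).div (hg2x.hasDerivAt.pow 2) (pow_ne_zero 2 hg2xpos.ne')
      |>.congr_deriv (by simp only [Pi.pow_apply]; push_cast; ring)
  rw [hD.deriv, div_pos_iff_of_pos_right (by positivity), mul_pos_iff_of_pos_left hg2xpos, sub_pos]

lemma deriv_div_pos_of_two_mul_deriv_mul_primG1_lt (hg1x : DifferentiableAt ℝ g1 x)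
    (hg2x : DifferentiableAt ℝ g2 x) (hg1xpos : 0 < g1 x) (hg2xpos : 0 < g2 x)
    (hG1x : 0 < primG1 g1 x) (hkey : g1 x ^ 2 < 2 * deriv g1 x * primG1 g1 x)
    (h : 2 * deriv g2 x * primG1 g1 x < g1 x * g2 x) :
    0 < deriv (fun t => g1 t / g2 t) x := by
  rw [(hg1x.hasDerivAt.fun_div hg2x.hasDerivAt hg2xpos.ne').deriv]
  have : primG1 g1 x * (g1 x * deriv g2 x) < primG1 g1 x * (deriv g1 x * g2 x) := by
    nlinarith [mul_lt_mul_of_pos_left h hg1xpos, mul_lt_mul_of_pos_right hkey hg2xpos]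
  exact div_pos (by nlinarith [lt_of_mul_lt_mul_left this hG1x.le]) (by positivity)

lemma two_mul_deriv_mul_primG1_lt {d : ℝ} (hd : d < 1) (hg1xpos : 0 < g1 x)
    (hg2xpos : 0 < g2 x) (hG1x : 0 < primG1 g1 x)
    (h : 0 ≤ d * g1 x / primG1 g1 x - 2 * deriv g2 x / g2 x) :
    2 * deriv g2 x * primG1 g1 x < g1 x * g2 x := by
  have : 2 * deriv g2 x * primG1 g1 x ≤ d * g1 x * g2 x :=
    (div_le_div_iff₀ hg2xpos hG1x).mp (sub_nonneg.mp h)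
  nlinarith [mul_pos hg1xpos hg2xpos]

end

open Set in
theorem stmt_2_general
    (g1 g2 : ℝ → ℝ)
    (hg1C : ContDiff ℝ 3 g1) (hg2C : ContDiff ℝ 3 g2)
    (hg10 : g1 0 = 0) (hg20 : g2 0 = 0)
    (hg1d : ∀ x > (0:ℝ), 0 < deriv g1 x) (hg2d : ∀ x > (0:ℝ), 0 < deriv g2 x)
    (hg1dd : ∀ x > (0:ℝ), 0 < deriv (deriv g1) x)
    (x : ℝ) (hx : 0 < x) :
    0 < deriv (fun t => (g1 t) ^ 2 / primG1 g1 t) x ∧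
    (0 < deriv (fun t => primG1 g1 t / (g2 t) ^ 2) x →
      0 < deriv (fun t => g1 t / g2 t) x) ∧
    ((∃ d : ℝ, 0 ≤ d ∧ d < 1 ∧
        0 ≤ d * g1 x / primG1 g1 x - 2 * deriv g2 x / g2 x) →
      0 < deriv (fun t => primG1 g1 t / (g2 t) ^ 2) x) := by
  have hg1 : Continuous g1 := hg1C.continuous
  have hg1x : DifferentiableAt ℝ g1 x := hg1C.differentiable (by norm_num) x
  have hg2x : DifferentiableAt ℝ g2 x := hg2C.differentiable (by norm_num) x
  have hg1pos : ∀ t > 0, 0 < g1 t := fun t => pos_of_deriv_pos hg1 hg10 hg1d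
  have hg2xpos : 0 < g2 x := pos_of_deriv_pos hg2C.continuous hg20 hg2d hx
  have hG1x : 0 < primG1 g1 x := primG1_pos hg1 hg1pos hx
  have hkey : g1 x ^ 2 < 2 * deriv g1 x * primG1 g1 x :=
    sq_lt_two_mul_deriv_mul_primG1 (hg1C.of_le (by norm_num)) hg10 hg1pos hg1dd hx
  refine ⟨deriv_sq_div_primG1_pos hg1 hg1x (hg1pos x hx) hG1x hkey, fun h => ?_, ?_⟩
  · exact deriv_div_pos_of_two_mul_deriv_mul_primG1_lt hg1x hg2x (hg1pos x hx) hg2xpos hG1x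
      hkey ((deriv_primG1_div_sq_pos_iff hg1 hg2x hg2xpos).mp h)
  · rintro ⟨d, -, hd1, hd⟩
    exact (deriv_primG1_div_sq_pos_iff hg1 hg2x hg2xpos).mpr
      (two_mul_deriv_mul_primG1_lt hd1 (hg1pos x hx) hg2xpos hG1x hd)

theorem stmt_2
    (g1 g2 : ℝ → ℝ)
    (hg1C : ContDiff ℝ 3 g1) (hg2C : ContDiff ℝ 3 g2)
    (hg10 : g1 0 = 0) (hg20 : g2 0 = 0)
    (hg1d : ∀ x > (0:ℝ), 0 < deriv g1 x) (hg2d : ∀ x > (0:ℝ), 0 < deriv g2 x)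
    (hg1dd : ∀ x > (0:ℝ), 0 < deriv (deriv g1) x)
    (hg2dd : ∀ x > (0:ℝ), 0 < deriv (deriv g2) x)
    (hg1ddd : ∀ x > (0:ℝ), 0 ≤ deriv (deriv (deriv g1)) x)
    (hg2ddd : ∀ x > (0:ℝ), 0 ≤ deriv (deriv (deriv g2)) x)
    (x : ℝ) (hx : 0 < x) :
    0 < deriv (fun t => (g1 t) ^ 2 / primG1 g1 t) x ∧
    (0 < deriv (fun t => primG1 g1 t / (g2 t) ^ 2) x →
      0 < deriv (fun t => g1 t / g2 t) x) ∧
    ((∃ d : ℝ, 0 ≤ d ∧ d < 1 ∧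
        0 ≤ d * g1 x / primG1 g1 x - 2 * deriv g2 x / g2 x) →
      0 < deriv (fun t => primG1 g1 t / (g2 t) ^ 2) x) :=
  stmt_2_general g1 g2 hg1C hg2C hg10 hg20 hg1d hg2d hg1dd x hx
end
end

section
/- Let α > 0, let (u₁,…,u_n) ∈ (0,∞)ⁿ be a positive solution of the discrete system (Sα), and let C > 0 be any upper bound of u_n (i.e. u_n ≤ C). Then u_n < e^M · u₁, where M := g₁′(C). -/
noncomputable section

/-!
The increments `dₘ = u_{m+1} - uₘ` satisfy `d₁ = (h²/2) g₁(u₁)` and `dₘ = d_{m-1} + h² g₁(uₘ)`,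
so they are positive and `u` increases; hence every `u_k` lies in `(0, C]`. Convexity of `g₁` and
`g₁(0) = 0` give `g₁(x) ≤ M x` on `[0, C]`, so `dₘ ≤ h² m M uₘ` and
`u_{m+1} ≤ (1 + h² m M) uₘ < exp (h² m M) uₘ`. The product of these factors is
`exp (h² M n(n-1)/2) = exp (M n / (2(n-1))) ≤ exp M`.
-/

open Real Set

theorem pos_of_deriv_pos_s7 {g : ℝ → ℝ} (hg : Continuous g) (hg0 : g 0 = 0)
    (hg' : ∀ x > (0:ℝ), 0 < deriv g x) {x : ℝ} (hx : 0 < x) : 0 < g x := by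
  have hmono : StrictMonoOn g (Ici 0) :=
    strictMonoOn_of_deriv_pos (convex_Ici 0) hg.continuousOn (by simpa using hg')
  simpa [hg0] using hmono self_mem_Ici hx.le hx

theorem le_deriv_mul_of_monotoneOn_deriv {g : ℝ → ℝ} (hg : Differentiable ℝ g) (hg0 : g 0 = 0)
    (hg' : MonotoneOn (deriv g) (Ici 0)) {x C : ℝ} (hx : 0 ≤ x) (hxC : x ≤ C) :
    g x ≤ deriv g C * x := by
  rcases hx.eq_or_lt with rfl | hx
  · simp [hg0]
  obtain ⟨c, hc, hslope⟩ := exists_deriv_eq_slope g hx hg.continuous.continuousOn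
    hg.differentiableOn
  have hgx : g x = deriv g c * x := by
    rw [hslope, hg0]
    field_simp
    ring
  rw [hgx]
  exact mul_le_mul_of_nonneg_right (hg' hc.1.le (hx.le.trans hxC) (hc.2.le.trans hxC)) hx.le

theorem lt_exp_mul_of_succ_lt {a : ℕ → ℝ} {c : ℝ} {N : ℕ} (hN : 2 ≤ N)
    (ha : ∀ m, 1 ≤ m → m < N → a (m + 1) < exp (c * m) * a m) :
    a N < exp (c * (N * (N - 1) / 2)) * a 1 := by
  induction N, hN using Nat.le_induction with
  | base =>
    convert ha 1 le_rfl one_lt_two using 3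
    norm_num
  | succ N hN ih =>
    calc a (N + 1) < exp (c * N) * a N := ha N (by omega) (by omega)
      _ < exp (c * N) * (exp (c * (N * (N - 1) / 2)) * a 1) :=
          mul_lt_mul_of_pos_left (ih fun m hm hmN => ha m hm (by omega)) (exp_pos _)
      _ = exp (c * ((N + 1 : ℕ) * ((N + 1 : ℕ) - 1) / 2)) * a 1 := by
          rw [← mul_assoc, ← exp_add]
          push_cast
          ring_nf

structure IsPosForwardSolution (f : ℝ → ℝ) (n : ℕ) (h : ℝ) (u : ℕ → ℝ) : Prop where
  pos : ∀ k, 1 ≤ k → k ≤ n → 0 < u k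
  left : u 2 - u 1 = h ^ 2 / 2 * f (u 1)
  interior : ∀ k, 2 ≤ k → k ≤ n - 1 → u (k + 1) - 2 * u k + u (k - 1) = h ^ 2 * f (u k)

theorem IsSolution.isPosForwardSolution {g1 g2 : ℝ → ℝ} {n : ℕ} {h α : ℝ} {u : ℕ → ℝ}
    (hu : IsSolution g1 g2 n h α u) : IsPosForwardSolution g1 n h u :=
  ⟨hu.1, hu.2.1, hu.2.2.1⟩

namespace IsPosForwardSolution

variable {f : ℝ → ℝ} {n : ℕ} {h : ℝ} {u : ℕ → ℝ}

theorem increment_succ (hu : IsPosForwardSolution f n h u) {m : ℕ} (hm : 1 ≤ m)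
    (hmn : m + 2 ≤ n) : u (m + 2) - u (m + 1) = u (m + 1) - u m + h ^ 2 * f (u (m + 1)) := by
  have := hu.interior (m + 1) (by omega) (by omega)
  simp only [Nat.add_sub_cancel] at this
  linarith

theorem increment_pos (hu : IsPosForwardSolution f n h u) (hh : h ≠ 0)
    (hf : ∀ x > (0:ℝ), 0 < f x) {m : ℕ} (hm : 1 ≤ m) (hmn : m + 1 ≤ n) :
    0 < u (m + 1) - u m := by
  induction m, hm using Nat.le_induction with
  | base =>
    rw [hu.left]
    have hf1 := hf _ (hu.pos 1 le_rfl (by omega))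
    positivity
  | succ m hm ih =>
    rw [hu.increment_succ hm (by omega)]
    have hfm := hf _ (hu.pos (m + 1) (by omega) (by omega))
    have hinc := ih (by omega)
    positivity

theorem monotoneOn (hu : IsPosForwardSolution f n h u) (hh : h ≠ 0)
    (hf : ∀ x > (0:ℝ), 0 < f x) : MonotoneOn u (Icc 1 n) :=
  monotoneOn_of_le_succ ordConnected_Icc fun _ _ hm hm' =>
    (sub_pos.mp (hu.increment_pos hh hf hm.1 hm'.2)).le

theorem increment_le (hu : IsPosForwardSolution f n h u) (hh : h ≠ 0)
    (hf : ∀ x > (0:ℝ), 0 < f x) {M : ℝ} (hM : 0 ≤ M)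
    (hfM : ∀ k, 1 ≤ k → k < n → f (u k) ≤ M * u k) {m : ℕ} (hm : 1 ≤ m) (hmn : m < n) :
    u (m + 1) - u m ≤ h ^ 2 * M * m * u m := by
  induction m, hm using Nat.le_induction with
  | base =>
    rw [hu.left]
    have hf1 := hfM 1 le_rfl hmn
    have hMu := mul_nonneg hM (hu.pos 1 le_rfl hmn.le).le
    push_cast
    nlinarith [sq_nonneg h, mul_le_mul_of_nonneg_left hf1 (sq_nonneg h)]
  | succ m hm ih =>
    rw [hu.increment_succ hm (by omega)]
    have hfm := hfM (m + 1) (by omega) hmn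
    have hinc := hu.increment_pos hh hf hm (by omega)
    have hinc_le := ih (by omega)
    have hum : h ^ 2 * M * m * u m ≤ h ^ 2 * M * m * u (m + 1) :=
      mul_le_mul_of_nonneg_left (by linarith) (by positivity)
    push_cast
    nlinarith [sq_nonneg h]

theorem succ_lt_exp_mul (hu : IsPosForwardSolution f n h u) (hh : h ≠ 0)
    (hf : ∀ x > (0:ℝ), 0 < f x) {M : ℝ} (hM : 0 < M)
    (hfM : ∀ k, 1 ≤ k → k < n → f (u k) ≤ M * u k) {m : ℕ} (hm : 1 ≤ m) (hmn : m < n) :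
    u (m + 1) < exp (h ^ 2 * M * m) * u m := by
  have hinc := hu.increment_le hh hf hM.le hfM hm hmn
  have hum := hu.pos m hm hmn.le
  have hexp := add_one_lt_exp (x := h ^ 2 * M * m) (by positivity)
  nlinarith

end IsPosForwardSolution

theorem stmt_7_general (n : ℕ) (hn : 2 ≤ n) (h : ℝ) (hh : h = 1 / ((n : ℝ) - 1))
    (g1 g2 : ℝ → ℝ)
    (hg1C : ContDiff ℝ 3 g1)
    (hg10 : g1 0 = 0)
    (hg1d : ∀ x > (0:ℝ), 0 < deriv g1 x)
    (hg1dd : ∀ x > (0:ℝ), 0 < deriv (deriv g1) x)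
    (α : ℝ) (u : ℕ → ℝ) (hu : IsSolution g1 g2 n h α u)
    (C : ℝ) (hunC : u n ≤ C) :
    u n < Real.exp (deriv g1 C) * u 1 := by
  set M := deriv g1 C
  replace hu := hu.isPosForwardSolution
  have hnR : (2:ℝ) ≤ n := by exact_mod_cast hn
  have hh0 : h ≠ 0 := by rw [hh]; exact one_div_ne_zero (by linarith)
  have hg1pos : ∀ x > (0:ℝ), 0 < g1 x := fun _ hx =>
    pos_of_deriv_pos_s7 hg1C.continuous hg10 hg1d hx
  have hmono := hu.monotoneOn hh0 hg1pos
  have hC : 0 < C := (hu.pos n (by omega) le_rfl).trans_le hunC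
  have hg1'mono : MonotoneOn (deriv g1) (Ici 0) :=
    (strictMonoOn_of_deriv_pos (convex_Ici 0) (hg1C.continuous_deriv (by norm_num)).continuousOn
      (by simpa using hg1dd)).monotoneOn
  have hg1M : ∀ k, 1 ≤ k → k < n → g1 (u k) ≤ M * u k := fun k hk hkn =>
    le_deriv_mul_of_monotoneOn_deriv (hg1C.differentiable (by norm_num)) hg10 hg1'mono
      (hu.pos k hk hkn.le).le ((hmono ⟨hk, hkn.le⟩ ⟨by omega, le_rfl⟩ hkn.le).trans hunC)
  have hexponent : h ^ 2 * M * (n * (n - 1) / 2) ≤ M := by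
    have : h ^ 2 * (n * (n - 1) / 2) = n / (2 * (n - 1)) := by
      rw [hh]; field_simp
    rw [mul_right_comm, this, mul_le_iff_le_one_left (hg1d C hC), div_le_one (by linarith)]
    linarith
  calc u n < exp (h ^ 2 * M * (n * (n - 1) / 2)) * u 1 :=
        lt_exp_mul_of_succ_lt hn fun m hm hmn =>
          hu.succ_lt_exp_mul hh0 hg1pos (hg1d C hC) hg1M hm hmn
    _ ≤ exp M * u 1 := by gcongr; exact (hu.pos 1 le_rfl (by omega)).le

theorem stmt_7 (n : ℕ) (hn : 2 ≤ n) (h : ℝ) (hh : h = 1 / ((n : ℝ) - 1))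
    (g1 g2 : ℝ → ℝ)
    (hg1C : ContDiff ℝ 3 g1) (hg2C : ContDiff ℝ 3 g2)
    (hg10 : g1 0 = 0) (hg20 : g2 0 = 0)
    (hg1d : ∀ x > (0:ℝ), 0 < deriv g1 x) (hg2d : ∀ x > (0:ℝ), 0 < deriv g2 x)
    (hg1dd : ∀ x > (0:ℝ), 0 < deriv (deriv g1) x)
    (hg2dd : ∀ x > (0:ℝ), 0 < deriv (deriv g2) x)
    (hg1ddd : ∀ x > (0:ℝ), 0 ≤ deriv (deriv (deriv g1)) x)
    (hg2ddd : ∀ x > (0:ℝ), 0 ≤ deriv (deriv (deriv g2)) x)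
    (α : ℝ) (hα : 0 < α) (u : ℕ → ℝ) (hu : IsSolution g1 g2 n h α u)
    (C : ℝ) (hC : 0 < C) (hunC : u n ≤ C) :
    u n < Real.exp (deriv g1 C) * u 1 :=
  stmt_7_general n hn h hh g1 g2 hg1C hg10 hg1d hg1dd α u hu C hunC
end
end
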